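/- arXiv:1806.05534 — 2 statements merged into one kernel-verified Lean document; each statement's English description precedes it below -/
import Mathlib

section
/- Let Θ be a bounded analytic function on ℂ₊ with unimodular boundary values on ℝ that is analytic on a neighborhood of ℝ, such that |Θ(x+h) − Θ(x)| ≤ M|h| for all real x, h. Then the derivative Θ' is bounded by M on all of ℂ₊, i.e. Θ' ∈ H^∞(ℂ₊) with ‖Θ'‖ ≤ M. -/
open MeasureTheory Complex Filter Topology Set

noncomputable section

/-- L²(ℝ) of complex-valued functions. -/
abbrev L2R : Type := Lp ℂ 2 (volume : Measure ℝ)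

/-- The upper half-plane. -/
def UHP : Set ℂ := {z : ℂ | 0 < z.im}

/-- A meromorphic inner function: analytic on an open set containing the closed upper
half-plane (this encodes the analytic continuation across ℝ available for meromorphic
inner functions), bounded by 1 on ℂ₊, and unimodular on ℝ. -/
def IsMIF (Θ : ℂ → ℂ) : Prop :=
  (∃ S : Set ℂ, IsOpen S ∧ {z : ℂ | 0 ≤ z.im} ⊆ S ∧ DifferentiableOn ℂ Θ S) ∧
    (∀ z : ℂ, 0 < z.im → ‖Θ z‖ ≤ 1) ∧ (∀ x : ℝ, ‖Θ (x : ℂ)‖ = 1)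

/-- Membership in the Hardy space H²(ℂ₊), described via boundary values: `f ∈ L²(ℝ)` is
the a.e. vertical boundary limit of an analytic function on ℂ₊ with uniformly bounded
L² means on horizontal lines. -/
def MemH2 (f : L2R) : Prop :=
  ∃ F : ℂ → ℂ, DifferentiableOn ℂ F UHP ∧
    (∃ C : ℝ, ∀ y : ℝ, 0 < y → (∫ x : ℝ, ‖F ((x : ℂ) + y * Complex.I)‖ ^ 2) ≤ C) ∧
    ∀ᵐ x : ℝ, Tendsto (fun y : ℝ => F ((x : ℂ) + y * Complex.I)) (𝓝[>] 0) (𝓝 (f x))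

/-- Membership in the model space K_Θ = H² ∩ Θ·conj(H²). -/
def MemKTheta (Θ : ℂ → ℂ) (f : L2R) : Prop :=
  MemH2 f ∧ ∃ h : L2R, MemH2 h ∧ ∀ᵐ x : ℝ, f x = Θ (x : ℂ) * (starRingEnd ℂ) (h x)

/-- C(ℝ̇): real-valued continuous functions on ℝ with equal finite limits at ±∞. -/
def MemCRdot (a : ℝ → ℝ) : Prop :=
  Continuous a ∧ ∃ l : ℝ, Tendsto a atTop (𝓝 l) ∧ Tendsto a atBot (𝓝 l)

/-- C(ℝ̇) for complex-valued functions. -/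
def MemCRdotC (a : ℝ → ℂ) : Prop :=
  Continuous a ∧ ∃ l : ℂ, Tendsto a atTop (𝓝 l) ∧ Tendsto a atBot (𝓝 l)

/-- `v` is the value at `x` of the Hilbert transform of `b` (principal value). -/
def HilbertAt (b : ℝ → ℝ) (x : ℝ) (v : ℝ) : Prop :=
  Tendsto (fun ε : ℝ =>
      (1 / Real.pi) * ∫ t in {t : ℝ | ε < |x - t|}, ((x - t)⁻¹ + t / (1 + t ^ 2)) * b t)
    (𝓝[>] 0) (𝓝 v)

/-- `bt` is (a.e.) the Hilbert transform of `b`. -/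
def IsHilbertTransform (b bt : ℝ → ℝ) : Prop := ∀ᵐ x : ℝ, HilbertAt b x (bt x)

/-- u ∈ H^∞ + C(ℝ̇): a.e. the sum of the boundary values of a bounded analytic function
on ℂ₊ and of a function in C(ℝ̇). -/
def MemHinfC (u : ℝ → ℂ) : Prop :=
  ∃ (h : ℂ → ℂ) (hb g : ℝ → ℂ),
    DifferentiableOn ℂ h UHP ∧ (∃ M : ℝ, ∀ z ∈ UHP, ‖h z‖ ≤ M) ∧
    (∀ᵐ x : ℝ, Tendsto (fun y : ℝ => h ((x : ℂ) + y * Complex.I)) (𝓝[>] 0) (𝓝 (hb x))) ∧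
    MemCRdotC g ∧ ∀ᵐ x : ℝ, u x = hb x + g x

/-- The quasicontinuous class QC = (H^∞+C(ℝ̇)) ∩ conj(H^∞+C(ℝ̇)). -/
def MemQC (u : ℝ → ℂ) : Prop :=
  MemHinfC u ∧ MemHinfC (fun x => (starRingEnd ℂ) (u x))

/-- `P` is the Riesz projection, i.e. the orthogonal projection of L²(ℝ) onto H². -/
def IsRieszProjection (P : L2R →L[ℂ] L2R) : Prop :=
  (∀ f : L2R, MemH2 (P f)) ∧ (∀ f : L2R, MemH2 f → P f = f) ∧
    ∀ f g : L2R, MemH2 g → (inner ℂ (f - P f) g : ℂ) = 0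

/-- `M` is the operator of multiplication by `u` on L². -/
def IsMult (u : ℝ → ℂ) (M : L2R →L[ℂ] L2R) : Prop :=
  ∀ f : L2R, (M f : ℝ → ℂ) =ᵐ[volume] fun x => u x * f x

/-- A continuous linear map is invertible (with continuous linear two-sided inverse). -/
def CLMInvertible {E F : Type*} [NormedAddCommGroup E] [NormedSpace ℂ E]
    [NormedAddCommGroup F] [NormedSpace ℂ F] (T : E →L[ℂ] F) : Prop :=
  ∃ S : F →L[ℂ] E, (∀ x, S (T x) = x) ∧ ∀ y, T (S y) = y

/-- An operator is unitary plus compact. -/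
def UnitaryPlusCompact {E : Type*} [NormedAddCommGroup E] [InnerProductSpace ℂ E]
    (T : E →L[ℂ] E) : Prop :=
  ∃ U K : E →L[ℂ] E, (∀ x y : E, (inner ℂ (U x) (U y) : ℂ) = inner ℂ x y) ∧
    Function.Surjective U ∧ IsCompactOperator (⇑K) ∧ T = U + K

/-- The Herglotz function G associated with the Clark measure Σ ν_k δ_{λ_k}. -/
def ClarkG (lam nu : ℕ → ℝ) (z : ℂ) : ℂ :=
  ∑' k : ℕ, (nu k : ℂ) * ((((lam k : ℝ) : ℂ) - z)⁻¹ - ((lam k : ℝ) : ℂ) / (((lam k : ℝ) : ℂ) ^ 2 + 1))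

/-- The Clark inner function I = (G - i)/(G + i). -/
def ClarkInner (lam nu : ℕ → ℝ) (z : ℂ) : ℂ :=
  (ClarkG lam nu z - Complex.I) / (ClarkG lam nu z + Complex.I)

/-- Separation condition inf (λ_{n+1} - λ_n) ≥ δ. -/
def Separated (lam : ℕ → ℝ) (δ : ℝ) : Prop := ∀ n : ℕ, lam n + δ ≤ lam (n + 1)

/-- The Levinson-type condition \sup_n |Σ_{k≠n} (1/(λ_n-λ_k) + λ_k/(λ_k²+1))| < ∞. -/
def Levinson (lam : ℕ → ℝ) : Prop :=
  ∃ C : ℝ, ∀ n : ℕ,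
    |∑' k : {k : ℕ // k ≠ n}, ((lam n - lam k)⁻¹ + lam k / ((lam k) ^ 2 + 1))| ≤ C

/-- Admissible Clark weights: positive, bounded, with Σ ν_k/(1+λ_k²) < ∞. -/
def ClarkWeights (lam nu : ℕ → ℝ) : Prop :=
  (∀ k, 0 < nu k) ∧ (∃ B : ℝ, ∀ k, nu k ≤ B) ∧
    Summable (fun k => nu k / (1 + (lam k) ^ 2))

/-- The normalized reproducing kernel of K_U at a real point l. -/
def normKernel (U : ℂ → ℂ) (l : ℝ) (z : ℂ) : ℂ :=
  (Complex.I / ((Real.sqrt (2 * Real.pi * ‖deriv U (l : ℂ)‖) : ℝ) : ℂ)) *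
    ((1 - (starRingEnd ℂ) (U ((l : ℝ) : ℂ)) * U z) / (z - ((l : ℝ) : ℂ)))

/-- η_n = |I'(λ_n)|^{1/2} |Θ'(λ_n)|^{-1/2}. -/
def eta (Inn Θ : ℂ → ℂ) (lam : ℕ → ℝ) (n : ℕ) : ℝ :=
  Real.sqrt ‖deriv Inn ((lam n : ℝ) : ℂ)‖ / Real.sqrt ‖deriv Θ ((lam n : ℝ) : ℂ)‖

/-- (x_n) is a Riesz sequence. -/
def RieszSeq {E : Type*} [NormedAddCommGroup E] [NormedSpace ℂ E] (x : ℕ → E) : Prop :=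
  ∃ c C : ℝ, 0 < c ∧ ∀ (s : Finset ℕ) (a : ℕ → ℂ),
    c * ∑ n ∈ s, ‖a n‖ ^ 2 ≤ ‖∑ n ∈ s, a n • x n‖ ^ 2 ∧
    ‖∑ n ∈ s, a n • x n‖ ^ 2 ≤ C * ∑ n ∈ s, ‖a n‖ ^ 2

/-- (x_n) is asymptotically orthonormal from rank N₀ on. -/
def AOSFrom {E : Type*} [NormedAddCommGroup E] [NormedSpace ℂ E] (x : ℕ → E) (N0 : ℕ) : Prop :=
  ∃ c C : ℕ → ℝ, Tendsto c atTop (𝓝 1) ∧ Tendsto C atTop (𝓝 1) ∧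
    ∀ N, N0 ≤ N → 0 < c N ∧ ∀ (s : Finset ℕ) (a : ℕ → ℂ), (∀ n ∈ s, N ≤ n) →
      c N * ∑ n ∈ s, ‖a n‖ ^ 2 ≤ ‖∑ n ∈ s, a n • x n‖ ^ 2 ∧
      ‖∑ n ∈ s, a n • x n‖ ^ 2 ≤ C N * ∑ n ∈ s, ‖a n‖ ^ 2

/-- Asymptotically orthonormal sequence. -/
def AOS {E : Type*} [NormedAddCommGroup E] [NormedSpace ℂ E] (x : ℕ → E) : Prop :=
  ∃ N0 : ℕ, AOSFrom x N0

/-- Asymptotically orthonormal basic sequence (AOS with N₀ the first index). -/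
def AOB {E : Type*} [NormedAddCommGroup E] [NormedSpace ℂ E] (x : ℕ → E) : Prop :=
  AOSFrom x 0

/-- Minimal sequence: no member lies in the closed span of the others. -/
def MinimalSeq {E : Type*} [NormedAddCommGroup E] [NormedSpace ℂ E] (x : ℕ → E) : Prop :=
  ∀ n : ℕ, x n ∉ closure ((Submodule.span ℂ (x '' {m : ℕ | m ≠ n}) : Submodule ℂ E) : Set E)

/-- cos of the angle between two subsets of a Hilbert space:
sup |⟨f,g⟩| / (‖f‖‖g‖) over nonzero f ∈ A, g ∈ B. -/
def cosAngleSet {E : Type*} [NormedAddCommGroup E] [InnerProductSpace ℂ E]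
    (A B : Set E) : ℝ :=
  sSup {r : ℝ | ∃ f ∈ A, f ≠ 0 ∧ ∃ g ∈ B, g ≠ 0 ∧ r = ‖(inner ℂ f g : ℂ)‖ / (‖f‖ * ‖g‖)}

/-- The subspace I·H² of L², described via boundary values. -/
def IHardySet (Inn : ℂ → ℂ) : Set L2R :=
  {g : L2R | ∃ h : L2R, MemH2 h ∧ ∀ᵐ x : ℝ, g x = Inn (x : ℂ) * h x}

/-- The Cayley transform / Blaschke factor φ(x) = (x-i)/(x+i) on ℝ. -/
def cayley (x : ℝ) : ℂ := ((x : ℂ) - Complex.I) / ((x : ℂ) + Complex.I)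

/-! For fixed real `h`, the function `z ↦ Θ (z + h) - Θ z` is bounded and analytic in `ℂ₊`,
continuous up to `ℝ`, and bounded by `M * |h|` on `ℝ`; by the Phragmén–Lindelöf principle it is
bounded by `M * |h|` on all of `ℂ₊`. Dividing by `h` and letting `h → 0` bounds `‖Θ' z‖` by `M`. -/

theorem PhragmenLindelof.upper_half_plane_of_bounded {E : Type*} [NormedAddCommGroup E]
    [NormedSpace ℂ E] {f : ℂ → E} {B C : ℝ} (hd : DiffContOnCl ℂ f UHP)
    (hB : ∀ z ∈ UHP, ‖f z‖ ≤ B) (hC : ∀ x : ℝ, ‖f x‖ ≤ C) {z : ℂ} (hz : 0 ≤ z.im) :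
    ‖f z‖ ≤ C := by
  -- rotate the upper half-plane onto the right half-plane
  have hrot : DiffContOnCl ℂ (fun w => f (I * w)) {w : ℂ | 0 < w.re} :=
    hd.comp (differentiable_id.const_mul I).diffContOnCl fun w hw => by simpa [UHP] using hw
  have hrot_le : ∀ w : ℂ, 0 < w.re → ‖f (I * w)‖ ≤ B := fun w hw => hB _ (by simpa [UHP] using hw)
  have key := PhragmenLindelof.right_half_plane_of_bounded_on_real hrot
    ⟨1, one_lt_two, 0, .of_bound B <| eventually_inf_principal.2 <| .of_forall fun w hw => by
      simpa using hrot_le w hw⟩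
    (isBoundedUnder_of_eventually_le (a := B) <| (eventually_gt_atTop 0).mono fun x hx =>
      hrot_le x (by simpa using hx))
    (fun y => by simpa [mul_left_comm I, ← ofReal_neg] using hC (-y))
    (z := -(I * z)) (by simpa using hz)
  simpa [← mul_assoc] using key

theorem DiffContOnCl.norm_add_ofReal_sub_le {E : Type*} [NormedAddCommGroup E]
    [NormedSpace ℂ E] {f : ℂ → E} {B M : ℝ} (hd : DiffContOnCl ℂ f UHP)
    (hB : ∀ z ∈ UHP, ‖f z‖ ≤ B)
    (hLip : ∀ x h : ℝ, ‖f ((x : ℂ) + (h : ℂ)) - f (x : ℂ)‖ ≤ M * |h|) (h : ℝ) {z : ℂ}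
    (hz : 0 ≤ z.im) : ‖f (z + h) - f z‖ ≤ M * |h| := by
  refine PhragmenLindelof.upper_half_plane_of_bounded (B := B + B)
    ((hd.comp (differentiable_id.add_const _).diffContOnCl fun w hw => ?_).sub hd)
    (fun w hw => ?_) (hLip · h) hz
  · simpa [UHP] using hw
  · exact (norm_sub_le _ _).trans (add_le_add (hB _ (by simpa [UHP] using hw)) (hB w hw))

theorem norm_deriv_le_of_norm_add_ofReal_sub_le {E : Type*} [NormedAddCommGroup E]
    [NormedSpace ℂ E] {f : ℂ → E} {z : ℂ} {M : ℝ} (hf : DifferentiableAt ℂ f z)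
    (hM : ∀ h : ℝ, ‖f (z + h) - f z‖ ≤ M * |h|) : ‖deriv f z‖ ≤ M := by
  have hM₀ : 0 ≤ M := by simpa using (norm_nonneg _).trans (hM 1)
  have hshift : HasDerivAt (fun w => f (z + w)) (deriv f z) ((0 : ℝ) : ℂ) :=
    HasDerivAt.comp_const_add z _ (by simpa using hf.hasDerivAt)
  have hline : HasDerivAt (fun t : ℝ => f (z + t)) (deriv f z) 0 := by
    simpa [Function.comp_def] using hshift.scomp (0 : ℝ) ofRealCLM.hasDerivAt
  exact hline.le_of_lip' hM₀ (.of_forall fun t => by simpa using hM t)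

theorem IsMIF.diffContOnCl {Θ : ℂ → ℂ} (hΘ : IsMIF Θ) : DiffContOnCl ℂ Θ UHP := by
  obtain ⟨⟨S, -, hS, hd⟩, -⟩ := hΘ
  exact (hd.mono <| by simpa [UHP] using hS).diffContOnCl

theorem IsMIF.differentiableAt {Θ : ℂ → ℂ} (hΘ : IsMIF Θ) {z : ℂ} (hz : 0 ≤ z.im) :
    DifferentiableAt ℂ Θ z := by
  obtain ⟨⟨S, hSo, hS, hd⟩, -⟩ := hΘ
  exact hd.differentiableAt (hSo.mem_nhds (hS hz))

/-- a boundary Lipschitz estimate propagates to a derivative bound on ℂ₊. -/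
theorem stmt_1 (Θ : ℂ → ℂ) (hΘ : IsMIF Θ) (M : ℝ)
    (hLip : ∀ x h : ℝ, ‖Θ ((x : ℂ) + (h : ℂ)) - Θ (x : ℂ)‖ ≤ M * |h|) :
    ∀ z : ℂ, 0 < z.im → ‖deriv Θ z‖ ≤ M := by
  intro z hz
  have htranslate : ∀ h : ℝ, ‖Θ (z + h) - Θ z‖ ≤ M * |h| := fun h =>
    hΘ.diffContOnCl.norm_add_ofReal_sub_le hΘ.2.1 hLip h hz.le
  exact norm_deriv_le_of_norm_add_ofReal_sub_le (hΘ.differentiableAt hz.le) htranslate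

end
end

section
/- A sequence (x_n)_{n≥1} in a Hilbert space ℋ is an asymptotically orthonormal basic sequence (AOB) if and only if it is both an asymptotically orthonormal sequence (AOS) and a Riesz sequence; equivalently, if and only if it is minimal and an AOS. -/
open MeasureTheory Complex Filter Topology Set

noncomputable section

/-!
The only implication with content is minimal + AOS ⇒ Riesz. An AOS already has Riesz bounds on
a tail `n ≥ N₀`. For the finitely many earlier indices minimality gives
`dₙ = dist (xₙ, span {xₘ : m ≠ n}) > 0` and `‖aₙ‖ dₙ ≤ ‖∑ aₘ xₘ‖`, which controls the head
coefficients by the whole sum; Cauchy–Schwarz then bounds the head vector, hence the tail vector,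
hence (by the tail's lower bound) the tail coefficients. Conversely, a lower Riesz bound `c` keeps
every `xₙ` at distance at least `√c` from the span of the others, so Riesz sequences are minimal.
-/

section RieszSequences

variable {E : Type*} [NormedAddCommGroup E] [NormedSpace ℂ E]

def spanOthers (x : ℕ → E) (n : ℕ) : Submodule ℂ E :=
  Submodule.span ℂ (x '' {m : ℕ | m ≠ n})

lemma sum_erase_smul_mem_spanOthers (x : ℕ → E) (a : ℕ → ℂ) (s : Finset ℕ) (n : ℕ) :
    ∑ m ∈ s.erase n, a m • x m ∈ spanOthers x n :=
  Submodule.sum_mem _ fun m hm =>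
    Submodule.smul_mem _ _ (Submodule.subset_span ⟨m, Finset.ne_of_mem_erase hm, rfl⟩)

lemma norm_mul_infDist_spanOthers_le (x : ℕ → E) (a : ℕ → ℂ) {s : Finset ℕ} {n : ℕ}
    (hn : n ∈ s) :
    ‖a n‖ * Metric.infDist (x n) (spanOthers x n) ≤ ‖∑ m ∈ s, a m • x m‖ := by
  rcases eq_or_ne (a n) 0 with ha | ha
  · simp [ha]
  set g := ∑ m ∈ s.erase n, a m • x m
  have hg : -((a n)⁻¹ • g) ∈ spanOthers x n :=
    Submodule.neg_mem _ (Submodule.smul_mem _ _ (sum_erase_smul_mem_spanOthers x a s n))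
  calc ‖a n‖ * Metric.infDist (x n) (spanOthers x n)
      ≤ ‖a n‖ * ‖x n + (a n)⁻¹ • g‖ := by
        gcongr
        refine (Metric.infDist_le_dist_of_mem hg).trans_eq ?_
        rw [dist_eq_norm, sub_neg_eq_add]
    _ = ‖a n • x n + g‖ := by rw [← norm_smul, smul_add, smul_smul, mul_inv_cancel₀ ha, one_smul]
    _ = ‖∑ m ∈ s, a m • x m‖ := by rw [Finset.add_sum_erase s (fun m => a m • x m) hn]

lemma MinimalSeq.infDist_spanOthers_pos {x : ℕ → E} (hx : MinimalSeq x) (n : ℕ) :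
    0 < Metric.infDist (x n) (spanOthers x n) :=
  Metric.infDist_nonneg.lt_of_ne' fun h =>
    hx n ((Metric.mem_closure_iff_infDist_zero ⟨0, Submodule.zero_mem _⟩).2 h)

lemma MinimalSeq.sum_sq_le_mul_norm_sum_sq {x : ℕ → E} (hx : MinimalSeq x) (a : ℕ → ℂ)
    {s t u : Finset ℕ} (hts : t ⊆ s) (htu : t ⊆ u) :
    ∑ m ∈ t, ‖a m‖ ^ 2 ≤
      (∑ m ∈ u, (Metric.infDist (x m) (spanOthers x m))⁻¹ ^ 2) * ‖∑ m ∈ s, a m • x m‖ ^ 2 := by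
  have hcoord : ∀ m ∈ t, ‖a m‖ ^ 2 ≤
      (Metric.infDist (x m) (spanOthers x m))⁻¹ ^ 2 * ‖∑ m ∈ s, a m • x m‖ ^ 2 := by
    intro m hm
    have hd := (hx.infDist_spanOthers_pos m).ne'
    calc ‖a m‖ ^ 2
        = (Metric.infDist (x m) (spanOthers x m))⁻¹ ^ 2 *
            (‖a m‖ * Metric.infDist (x m) (spanOthers x m)) ^ 2 := by field_simp
      _ ≤ _ := by
          gcongr
          · exact mul_nonneg (norm_nonneg _) Metric.infDist_nonneg
          · exact norm_mul_infDist_spanOthers_le x a (hts hm)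
  calc ∑ m ∈ t, ‖a m‖ ^ 2
      ≤ ∑ m ∈ t, (Metric.infDist (x m) (spanOthers x m))⁻¹ ^ 2 * ‖∑ m ∈ s, a m • x m‖ ^ 2 :=
        Finset.sum_le_sum hcoord
    _ ≤ _ := by
        rw [← Finset.sum_mul]
        gcongr

lemma norm_sum_smul_sq_le (x : ℕ → E) (a : ℕ → ℂ) {s t : Finset ℕ} (hst : s ⊆ t) :
    ‖∑ m ∈ s, a m • x m‖ ^ 2 ≤ (∑ m ∈ t, ‖x m‖ ^ 2) * ∑ m ∈ s, ‖a m‖ ^ 2 :=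
  calc ‖∑ m ∈ s, a m • x m‖ ^ 2
      ≤ (∑ m ∈ s, ‖x m‖ * ‖a m‖) ^ 2 := by
        gcongr
        refine (norm_sum_le _ _).trans_eq (Finset.sum_congr rfl fun m _ => ?_)
        rw [norm_smul, mul_comm]
    _ ≤ (∑ m ∈ s, ‖x m‖ ^ 2) * ∑ m ∈ s, ‖a m‖ ^ 2 := Finset.sum_mul_sq_le_sq_mul_sq _ _ _
    _ ≤ (∑ m ∈ t, ‖x m‖ ^ 2) * ∑ m ∈ s, ‖a m‖ ^ 2 := by gcongr

lemma exists_upper_bound_of_tail {x : ℕ → E} {N : ℕ} {C : ℝ}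
    (htail : ∀ (s : Finset ℕ) (a : ℕ → ℂ), (∀ n ∈ s, N ≤ n) →
      ‖∑ n ∈ s, a n • x n‖ ^ 2 ≤ C * ∑ n ∈ s, ‖a n‖ ^ 2) :
    ∃ C' : ℝ, ∀ (s : Finset ℕ) (a : ℕ → ℂ),
      ‖∑ n ∈ s, a n • x n‖ ^ 2 ≤ C' * ∑ n ∈ s, ‖a n‖ ^ 2 := by
  set T := ∑ m ∈ Finset.range N, ‖x m‖ ^ 2
  refine ⟨2 * max T C, fun s a => ?_⟩
  set s₁ := s.filter (· < N)
  set s₂ := s.filter (¬ · < N)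
  set A₁ := ∑ m ∈ s₁, ‖a m‖ ^ 2
  set A₂ := ∑ m ∈ s₂, ‖a m‖ ^ 2
  have hA : ∑ m ∈ s, ‖a m‖ ^ 2 = A₁ + A₂ := (Finset.sum_filter_add_sum_filter_not _ _ _).symm
  have hhead : ‖∑ m ∈ s₁, a m • x m‖ ^ 2 ≤ T * A₁ :=
    norm_sum_smul_sq_le x a fun m hm => Finset.mem_range.2 (Finset.mem_filter.1 hm).2
  have htail' := htail s₂ a fun m hm => not_lt.1 (Finset.mem_filter.1 hm).2
  have hT : T * A₁ ≤ max T C * A₁ := by gcongr; exact le_max_left _ _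
  have hC : C * A₂ ≤ max T C * A₂ := by gcongr; exact le_max_right _ _
  have hsplit : ‖∑ m ∈ s, a m • x m‖ ^ 2 ≤
      2 * (‖∑ m ∈ s₁, a m • x m‖ ^ 2 + ‖∑ m ∈ s₂, a m • x m‖ ^ 2) := by
    rw [← Finset.sum_filter_add_sum_filter_not s (· < N)]
    exact (pow_le_pow_left₀ (norm_nonneg _) (norm_add_le _ _) 2).trans add_sq_le
  rw [hA]
  linarith

lemma MinimalSeq.exists_lower_bound_of_tail {x : ℕ → E} (hx : MinimalSeq x) {N : ℕ} {c : ℝ}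
    (hc : 0 < c)
    (htail : ∀ (s : Finset ℕ) (a : ℕ → ℂ), (∀ n ∈ s, N ≤ n) →
      c * ∑ n ∈ s, ‖a n‖ ^ 2 ≤ ‖∑ n ∈ s, a n • x n‖ ^ 2) :
    ∃ c' : ℝ, 0 < c' ∧ ∀ (s : Finset ℕ) (a : ℕ → ℂ),
      c' * ∑ n ∈ s, ‖a n‖ ^ 2 ≤ ‖∑ n ∈ s, a n • x n‖ ^ 2 := by
  set T := ∑ m ∈ Finset.range N, ‖x m‖ ^ 2
  set D := ∑ m ∈ Finset.range N, (Metric.infDist (x m) (spanOthers x m))⁻¹ ^ 2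
  have hT : 0 ≤ T := by positivity
  have hD : 0 ≤ D := by positivity
  refine ⟨(D + (2 + 2 * T * D) / c)⁻¹, by positivity, fun s a => ?_⟩
  set s₁ := s.filter (· < N)
  set s₂ := s.filter (¬ · < N)
  set A₁ := ∑ m ∈ s₁, ‖a m‖ ^ 2
  set A₂ := ∑ m ∈ s₂, ‖a m‖ ^ 2
  set F := ‖∑ m ∈ s, a m • x m‖
  have hA : ∑ m ∈ s, ‖a m‖ ^ 2 = A₁ + A₂ := (Finset.sum_filter_add_sum_filter_not _ _ _).symm
  have hs₁ : s₁ ⊆ Finset.range N := fun m hm => Finset.mem_range.2 (Finset.mem_filter.1 hm).2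
  have hA₁ : A₁ ≤ D * F ^ 2 := hx.sum_sq_le_mul_norm_sum_sq a (Finset.filter_subset _ _) hs₁
  have hhead : ‖∑ m ∈ s₁, a m • x m‖ ^ 2 ≤ T * A₁ := norm_sum_smul_sq_le x a hs₁
  have htail' : c * A₂ ≤ ‖∑ m ∈ s₂, a m • x m‖ ^ 2 :=
    htail s₂ a fun m hm => not_lt.1 (Finset.mem_filter.1 hm).2
  have hsplit : ‖∑ m ∈ s₂, a m • x m‖ ^ 2 ≤ 2 * (F ^ 2 + ‖∑ m ∈ s₁, a m • x m‖ ^ 2) := by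
    rw [eq_sub_of_add_eq' (Finset.sum_filter_add_sum_filter_not s (· < N) fun m => a m • x m)]
    exact (pow_le_pow_left₀ (norm_nonneg _) (norm_sub_le _ _) 2).trans add_sq_le
  have hA₂ : A₂ ≤ (2 + 2 * T * D) / c * F ^ 2 := by
    rw [div_mul_eq_mul_div, le_div_iff₀ hc]
    nlinarith [mul_le_mul_of_nonneg_left hA₁ hT]
  rw [hA, inv_mul_le_iff₀ (by positivity)]
  linarith

lemma MinimalSeq.rieszSeq_of_aos {x : ℕ → E} (hx : MinimalSeq x) (hA : AOS x) : RieszSeq x := by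
  obtain ⟨N, c, C, -, -, h⟩ := hA
  obtain ⟨hc, hbd⟩ := h N le_rfl
  obtain ⟨c', hc', hlow⟩ := hx.exists_lower_bound_of_tail hc fun s a hs => (hbd s a hs).1
  obtain ⟨C', hup⟩ := exists_upper_bound_of_tail fun s a hs => (hbd s a hs).2
  exact ⟨c', C', hc', fun s a => ⟨hlow s a, hup s a⟩⟩

lemma le_norm_sub_sq_of_mem_spanOthers {x : ℕ → E} {c : ℝ} (hc : 0 ≤ c)
    (hlow : ∀ (s : Finset ℕ) (a : ℕ → ℂ), c * ∑ n ∈ s, ‖a n‖ ^ 2 ≤ ‖∑ n ∈ s, a n • x n‖ ^ 2)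
    {n : ℕ} {y : E} (hy : y ∈ spanOthers x n) : c ≤ ‖x n - y‖ ^ 2 := by
  obtain ⟨l, hl, rfl⟩ := (Finsupp.mem_span_image_iff_linearCombination ℂ).1 hy
  have hn : n ∉ l.support := fun h => hl h rfl
  set a : ℕ → ℂ := Function.update (-l) n 1
  have hsum : ∑ m ∈ insert n l.support, a m • x m = x n - Finsupp.linearCombination ℂ x l := by
    rw [Finset.sum_insert hn, Finsupp.linearCombination_apply, Finsupp.sum, sub_eq_add_neg,
      ← Finset.sum_neg_distrib]
    congr 1
    · simp [a]
    · refine Finset.sum_congr rfl fun m hm => ?_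
      simp [a, Function.update_of_ne (ne_of_mem_of_not_mem hm hn)]
  have hone : 1 ≤ ∑ m ∈ insert n l.support, ‖a m‖ ^ 2 :=
    calc 1 = ‖a n‖ ^ 2 := by simp [a]
      _ ≤ _ := Finset.single_le_sum (f := fun m => ‖a m‖ ^ 2) (fun _ _ => by positivity)
          (Finset.mem_insert_self n l.support)
  calc c = c * 1 := (mul_one c).symm
    _ ≤ c * ∑ m ∈ insert n l.support, ‖a m‖ ^ 2 := by gcongr
    _ ≤ _ := by rw [← hsum]; exact hlow _ a

lemma RieszSeq.minimalSeq {x : ℕ → E} (hx : RieszSeq x) : MinimalSeq x := by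
  obtain ⟨c, _, hc, hbd⟩ := hx
  intro n hn
  obtain ⟨y, hy, hdist⟩ := Metric.mem_closure_iff.1 hn (√c) (Real.sqrt_pos.2 hc)
  have hlt := (Real.lt_sqrt dist_nonneg).1 hdist
  have hle := le_norm_sub_sq_of_mem_spanOthers hc.le (fun s a => (hbd s a).1) hy
  rw [← dist_eq_norm] at hle
  exact hlt.not_ge hle

lemma AOB.aos {x : ℕ → E} (h : AOB x) : AOS x := ⟨0, h⟩

lemma AOB.rieszSeq {x : ℕ → E} (h : AOB x) : RieszSeq x := by
  obtain ⟨c, C, -, -, h⟩ := h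
  obtain ⟨hc, hbd⟩ := h 0 le_rfl
  exact ⟨c 0, C 0, hc, fun s a => hbd s a fun n _ => Nat.zero_le n⟩

lemma AOS.aob_of_rieszSeq {x : ℕ → E} (hA : AOS x) (hR : RieszSeq x) : AOB x := by
  obtain ⟨N, c, C, hc, hC, h⟩ := hA
  obtain ⟨c₀, C₀, hc₀, hbd⟩ := hR
  have hpatch : ∀ (f : ℕ → ℝ) (v : ℝ), f =ᶠ[atTop] fun M => if M < N then v else f M :=
    fun f v => (eventually_ge_atTop N).mono fun M hM => (if_neg (not_lt.2 hM)).symm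
  refine ⟨fun M => if M < N then c₀ else c M, fun M => if M < N then C₀ else C M,
    hc.congr' (hpatch c c₀), hC.congr' (hpatch C C₀), fun M _ => ?_⟩
  dsimp only
  split_ifs with hM
  · exact ⟨hc₀, fun s a _ => hbd s a⟩
  · exact h M (not_lt.1 hM)

end RieszSequences

/-- (xₙ) is an AOB iff it is an AOS and a Riesz sequence, iff it is
minimal and an AOS. -/
theorem stmt_19 {E : Type*} [NormedAddCommGroup E] [InnerProductSpace ℂ E] (x : ℕ → E) :
    (AOB x ↔ (AOS x ∧ RieszSeq x)) ∧ (AOB x ↔ (MinimalSeq x ∧ AOS x)) :=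
  ⟨⟨fun h => ⟨h.aos, h.rieszSeq⟩, fun h => h.1.aob_of_rieszSeq h.2⟩,
    ⟨fun h => ⟨h.rieszSeq.minimalSeq, h.aos⟩,
      fun h => h.2.aob_of_rieszSeq (h.1.rieszSeq_of_aos h.2)⟩⟩
end
end
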